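/- Let A be the Jordan plane over a field of characteristic p > 2, with automorphism g given by g(x) = x, g(y) = y + x. The g-invariant elements of the homogeneous component A^n of degree n are exactly the linear span of {x^{n−pℓ} y^{pℓ} : 0 ≤ ℓ ≤ ⌊n/p⌋}. -/

import Mathlib

/-- Defining relation of the Jordan plane `k⟨x,y⟩/(yx - xy + (1/2)x²)`,
with `x = ι 0`, `y = ι 1`. -/
inductive JpRel (K : Type*) [Field K] :
    FreeAlgebra K (Fin 2) → FreeAlgebra K (Fin 2) → Prop
  | comm : JpRel K (FreeAlgebra.ι K (1 : Fin 2) * FreeAlgebra.ι K (0 : Fin 2))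
      (FreeAlgebra.ι K (0 : Fin 2) * FreeAlgebra.ι K (1 : Fin 2)
        - (1/2 : K) • (FreeAlgebra.ι K (0 : Fin 2)) ^ 2)

/-- The Jordan plane. -/
noncomputable abbrev Jp (K : Type*) [Field K] := RingQuot (JpRel K)

noncomputable abbrev Jx (K : Type*) [Field K] : Jp K :=
  RingQuot.mkAlgHom K (JpRel K) (FreeAlgebra.ι K (0 : Fin 2))
noncomputable abbrev Jy (K : Type*) [Field K] : Jp K :=
  RingQuot.mkAlgHom K (JpRel K) (FreeAlgebra.ι K (1 : Fin 2))

/-!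
Sending `x ^ i * y ^ j` to `X ^ j` is a well-defined linear map `A → k[X]`: it is `a ↦ a • 1`
for the representation `x ↦ X₀ ·`, `y ↦ X₁ · - ½ X₀² ∂₀` on `k[X₀, X₁]`, followed by `X₀ ↦ 1`,
and it is injective on each homogeneous component. By the formula for `g (y ^ m)`, `g` becomes
`f ↦ f + f' + ¼ f''` there. So `a` is fixed iff `f' + ¼ f'' = 0`, which forces `f' = 0` (look at
the top coefficient of `f'`), i.e. in characteristic `p` only the `X ^ m` with `p ∣ m` occur.
-/

namespace Polynomial

theorem eq_zero_of_add_smul_derivative_eq_zero {R : Type*} [Semiring R] {q : R[X]} (c : R)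
    (h : q + c • derivative q = 0) : q = 0 := by
  have htop := congrArg (coeff · q.natDegree) h
  simp only [coeff_add, coeff_smul, coeff_derivative,
    coeff_eq_zero_of_natDegree_lt q.natDegree.lt_succ_self, zero_mul, smul_zero, add_zero,
    coeff_zero] at htop
  exact leadingCoeff_eq_zero.1 htop

end Polynomial

namespace JordanPlane

section Representation

open MvPolynomial

variable (K : Type*) [Field K]

noncomputable def xOp : Module.End K (MvPolynomial (Fin 2) K) :=
  LinearMap.mulLeft K (X 0)

noncomputable def yOp : Module.End K (MvPolynomial (Fin 2) K) :=
  LinearMap.mulLeft K (X 1) -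
    (1/2 : K) • (LinearMap.mulLeft K (X 0 ^ 2)).comp (pderiv 0).toLinearMap

theorem yOp_mul_xOp : yOp K * xOp K = xOp K * yOp K - (1/2 : K) • xOp K ^ 2 := by
  refine LinearMap.ext fun q => ?_
  simp only [xOp, yOp, LinearMap.sub_apply, LinearMap.smul_apply, Module.End.mul_apply, pow_two,
    LinearMap.mulLeft_apply, LinearMap.comp_apply, Derivation.coeFn_coe, Derivation.leibniz,
    pderiv_X_self, smul_eq_mul, mul_one, smul_eq_C_mul]
  ring

theorem yOp_pow_apply_one (j : ℕ) : (yOp K ^ j) 1 = X 1 ^ j := by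
  induction j with
  | zero => rfl
  | succ j ih =>
    rw [pow_succ', Module.End.mul_apply, ih]
    simp [yOp, Derivation.leibniz_pow, pderiv_X_of_ne (show (1 : Fin 2) ≠ 0 by decide), pow_succ']

noncomputable def rep : Jp K →ₐ[K] Module.End K (MvPolynomial (Fin 2) K) :=
  RingQuot.liftAlgHom K ⟨FreeAlgebra.lift K ![xOp K, yOp K], by
    rintro _ _ ⟨⟩
    simpa only [map_mul, map_sub, map_smul, map_pow, FreeAlgebra.lift_ι_apply,
      Matrix.cons_val_zero, Matrix.cons_val_one] using yOp_mul_xOp K⟩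

theorem rep_Jx : rep K (Jx K) = xOp K := by
  rw [Jx, rep, RingQuot.liftAlgHom_mkAlgHom_apply, FreeAlgebra.lift_ι_apply]
  rfl

theorem rep_Jy : rep K (Jy K) = yOp K := by
  rw [Jy, rep, RingQuot.liftAlgHom_mkAlgHom_apply, FreeAlgebra.lift_ι_apply]
  rfl

end Representation

open Polynomial

variable {K : Type*} [Field K]

variable (K) in
noncomputable def dehomogenize : Jp K →ₗ[K] K[X] where
  toFun a := MvPolynomial.aeval ![1, X] (rep K a 1)
  map_add' a b := by simp
  map_smul' c a := by simp

theorem dehomogenize_monomial (i j : ℕ) : dehomogenize K (Jx K ^ i * Jy K ^ j) = X ^ j := by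
  simp [dehomogenize, rep_Jx, rep_Jy, yOp_pow_apply_one, xOp, LinearMap.pow_mulLeft]

theorem coeff_dehomogenize_sum {n : ℕ} (c : Fin (n + 1) → K) (i : Fin (n + 1)) :
    (dehomogenize K (∑ m, c m • (Jx K ^ (n - m) * Jy K ^ (m : ℕ)))).coeff i = c i := by
  simp [dehomogenize_monomial, coeff_X_pow, Fin.val_inj]

theorem Jy_mul_Jx : Jy K * Jx K = Jx K * Jy K - (1/2 : K) • Jx K ^ 2 := by
  simpa only [map_mul, map_sub, map_smul, map_pow] using
    RingQuot.mkAlgHom_rel K (JpRel.comm (K := K))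

theorem Jy_mul_Jx_mul (w : Jp K) :
    Jy K * (Jx K * w) = Jx K * (Jy K * w) - (1/2 : K) • (Jx K * (Jx K * w)) := by
  rw [← mul_assoc, Jy_mul_Jx, sub_mul, smul_mul_assoc, pow_two, mul_assoc, mul_assoc]

theorem monomial_mem_span_of_dvd {p n m : ℕ} (hp : 0 < p) (hm : m ≤ n) (hpm : p ∣ m) :
    Jx K ^ (n - m) * Jy K ^ m ∈ Submodule.span K
      (Set.range fun ℓ : Fin (n / p + 1) => Jx K ^ (n - p * (ℓ : ℕ)) * Jy K ^ (p * (ℓ : ℕ))) := by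
  obtain ⟨ℓ, rfl⟩ := hpm
  have hℓ : ℓ ≤ n / p := (Nat.le_div_iff_mul_le hp).2 (by rwa [mul_comm])
  exact Submodule.subset_span ⟨⟨ℓ, Nat.lt_succ_of_le hℓ⟩, rfl⟩

theorem span_dvd_le_span (p n : ℕ) :
    Submodule.span K
        (Set.range fun ℓ : Fin (n / p + 1) => Jx K ^ (n - p * (ℓ : ℕ)) * Jy K ^ (p * (ℓ : ℕ))) ≤
      Submodule.span K (Set.range fun m : Fin (n + 1) => Jx K ^ (n - (m : ℕ)) * Jy K ^ (m : ℕ)) := by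
  refine Submodule.span_le.2 ?_
  rintro _ ⟨ℓ, rfl⟩
  have hℓ : p * ℓ ≤ n := (Nat.mul_le_mul_left p (Nat.lt_succ_iff.1 ℓ.isLt)).trans (Nat.mul_div_le n p)
  exact Submodule.subset_span ⟨⟨p * ℓ, Nat.lt_succ_of_le hℓ⟩, rfl⟩

section Automorphism

variable (g : Jp K →ₐ[K] Jp K)

/-- For `m < 2` the truncated exponents `m - 1`, `m - 2` only occur with coefficient `0`. -/
theorem map_Jy_pow (hgy : g (Jy K) = Jy K + Jx K) (h2 : (2 : K) ≠ 0) (m : ℕ) :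
    g (Jy K ^ m) = Jy K ^ m + (m : K) • (Jx K * Jy K ^ (m - 1))
      + ((m : K) * ((m : K) - 1) / 4) • (Jx K ^ 2 * Jy K ^ (m - 2)) := by
  have add_two : ∀ k : ℕ, g (Jy K ^ (k + 2)) = Jy K ^ (k + 2)
      + ((k : K) + 2) • (Jx K * Jy K ^ (k + 1))
      + (((k : K) + 2) * ((k : K) + 1) / 4) • (Jx K ^ 2 * Jy K ^ k) := by
    have h4 : (4 : K) ≠ 0 := by
      simpa only [show (4 : K) = 2 * 2 by norm_num] using mul_ne_zero h2 h2
    intro k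
    induction k with
    | zero =>
      rw [map_pow, hgy]
      simp only [Nat.cast_zero, zero_add, pow_one, pow_zero, mul_one, pow_two, mul_add, add_mul,
        Jy_mul_Jx]
      match_scalars <;> field_simp <;> ring
    | succ k ih =>
      rw [pow_succ' _ (k + 2), map_mul, hgy, ih]
      simp only [mul_add, add_mul, mul_smul_comm, pow_two, mul_assoc, Jy_mul_Jx_mul,
        mul_sub, ← pow_succ']
      match_scalars <;> field_simp <;> ring
  obtain _ | _ | k := m
  · simp
  · simp [hgy]
  · rw [add_two k]
    push_cast
    module

theorem dehomogenize_map_monomial (hgx : g (Jx K) = Jx K) (hgy : g (Jy K) = Jy K + Jx K)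
    (h2 : (2 : K) ≠ 0) (i m : ℕ) :
    dehomogenize K (g (Jx K ^ i * Jy K ^ m)) =
      X ^ m + derivative (X ^ m) + (1/4 : K) • derivative (derivative (X ^ m)) := by
  rw [map_mul, map_pow, hgx, map_Jy_pow g hgy h2]
  simp only [mul_add, mul_smul_comm, ← mul_assoc, ← pow_add, ← pow_succ, map_add, map_smul,
    dehomogenize_monomial, derivative_X_pow, ← smul_eq_C_mul, smul_smul]
  obtain _ | m := m
  · simp
  · rw [show m + 1 - 2 = m - 1 by omega, add_tsub_cancel_right, Nat.cast_succ]
    module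

theorem dehomogenize_map_of_mem_span (hgx : g (Jx K) = Jx K) (hgy : g (Jy K) = Jy K + Jx K)
    (h2 : (2 : K) ≠ 0) {a : Jp K}
    (ha : a ∈ Submodule.span K (Set.range fun ij : ℕ × ℕ => Jx K ^ ij.1 * Jy K ^ ij.2)) :
    dehomogenize K (g a) = dehomogenize K a + derivative (dehomogenize K a)
      + (1/4 : K) • derivative (derivative (dehomogenize K a)) := by
  let T : K[X] →ₗ[K] K[X] := LinearMap.id + derivative + (1/4 : K) • (derivative ∘ₗ derivative)
  refine LinearMap.eqOn_span' (f := dehomogenize K ∘ₗ g.toLinearMap) (g := T ∘ₗ dehomogenize K)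
    ?_ ha
  rintro _ ⟨⟨i, m⟩, rfl⟩
  simpa [T, dehomogenize_monomial] using dehomogenize_map_monomial g hgx hgy h2 i m

end Automorphism

end JordanPlane

open JordanPlane Polynomial

/-- Let `A` be the Jordan plane over a field of characteristic `p > 2`, graded with
`deg x = deg y = 1`, and let `g` be the algebra automorphism with `g(x) = x`,
`g(y) = y + x`.  The `g`-invariant elements of the degree-`n` homogeneous component
(the span of `{x^{n-m} y^m : 0 ≤ m ≤ n}`) are exactly the linear span of
`{x^{n-pℓ} y^{pℓ} : 0 ≤ ℓ ≤ ⌊n/p⌋}`. -/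
theorem stmt18 (p : ℕ) [Fact p.Prime] (hp2 : 2 < p) (K : Type*) [Field K] [CharP K p]
    (g : Jp K →ₐ[K] Jp K) (hgx : g (Jx K) = Jx K) (hgy : g (Jy K) = Jy K + Jx K)
    (n : ℕ) (a : Jp K) :
    (a ∈ Submodule.span K
        (Set.range fun m : Fin (n + 1) => Jx K ^ (n - (m : ℕ)) * Jy K ^ (m : ℕ)) ∧
      g a = a) ↔
    a ∈ Submodule.span K
        (Set.range fun ℓ : Fin (n / p + 1) => Jx K ^ (n - p * (ℓ : ℕ)) * Jy K ^ (p * (ℓ : ℕ))) := by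
  have hp : p.Prime := Fact.out
  have h2 : (2 : K) ≠ 0 := Ring.two_ne_zero (by rw [ringChar.eq K p]; omega)
  constructor
  · rintro ⟨ha, hfix⟩
    obtain ⟨c, rfl⟩ := (Submodule.mem_span_range_iff_exists_fun K).1 ha
    set f := dehomogenize K (∑ i, c i • (Jx K ^ (n - i) * Jy K ^ (i : ℕ)))
    have hderiv : derivative f = 0 := by
      refine eq_zero_of_add_smul_derivative_eq_zero (1/4 : K) ?_
      have := dehomogenize_map_of_mem_span g hgx hgy h2
        (Submodule.span_mono (by rintro _ ⟨m, rfl⟩; exact ⟨(n - m, m), rfl⟩) ha)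
      rwa [hfix, add_assoc, left_eq_add] at this
    have hc : ∀ i : Fin (n + 1), ¬ p ∣ i → c i = 0 := fun i hi => by
      rw [← coeff_dehomogenize_sum c i]
      change f.coeff i = 0
      rw [← expand_contract p hderiv hp.ne_zero, coeff_expand hp.pos, if_neg hi]
    refine Submodule.sum_mem _ fun i _ => ?_
    by_cases hpi : p ∣ (i : ℕ)
    · exact Submodule.smul_mem _ _ (monomial_mem_span_of_dvd hp.pos (Nat.lt_succ_iff.1 i.isLt) hpi)
    · simp [hc i hpi]
  · intro ha
    refine ⟨span_dvd_le_span p n ha,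
      LinearMap.eqOn_span' (f := g.toLinearMap) (g := LinearMap.id) ?_ ha⟩
    rintro _ ⟨ℓ, rfl⟩
    have hpℓ : ((p * ℓ : ℕ) : K) = 0 := by simp
    simp [map_Jy_pow g hgy h2, hpℓ, hgx]
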